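/- Let X = σZ and X' = σ'Z, where Z is a real random variable with density f satisfying sup_x |x f(x)| ≤ C_f, Z is independent of the pair (σ, σ'), and σ, σ' are positive random variables with min(σ, σ') > ρ almost surely. Then sup_{x ∈ ℝ} E[|1{X ≤ x} − 1{X' ≤ x}|] ≤ (C_f/ρ) E[|σ − σ'|]. -/

import Mathlib

/-!
Conditionally on `(σ, σ') = (s, s')`, the two indicators differ exactly when `Z` lies in the
interval between `x / s` and `x / s'`. There `|y| ≥ |x| / max s s'`, so
`f ≤ C_f max s s' / |x|`, while the interval has length `|x| |s - s'| / (s s')`; the product is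
`C_f |s - s'| / min s s' ≤ (C_f / ρ) |s - s'|`. Independence of `Z` and `(σ, σ')` lets one
integrate this conditional bound against the law of `(σ, σ')`.
-/

open MeasureTheory ProbabilityTheory Set
open scoped symmDiff Interval

theorem Set.Iic_symmDiff_Iic {α : Type*} [LinearOrder α] (a b : α) :
    Iic a ∆ Iic b = Ι a b := by
  ext z
  simp only [mem_symmDiff, mem_Iic, mem_uIoc, not_le]
  tauto

lemma abs_div_max_le_abs_of_mem_uIoc {x s s' y : ℝ} (hs : 0 < s) (hs' : 0 < s')
    (hy : y ∈ Ι (x / s) (x / s')) : |x| / max s s' ≤ |y| := by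
  rcases le_total 0 x with hx | hx
  · have : x / max s s' ≤ min (x / s) (x / s') :=
      le_min (div_le_div_of_nonneg_left hx hs (le_max_left _ _))
        (div_le_div_of_nonneg_left hx hs' (le_max_right _ _))
    rw [abs_of_nonneg hx]
    exact (this.trans_lt hy.1).le.trans (le_abs_self y)
  · have : max (x / s) (x / s') ≤ x / max s s' := by
      refine max_le ?_ ?_ <;>
        simpa only [neg_div, neg_le_neg_iff] using
          div_le_div_of_nonneg_left (neg_nonneg.2 hx) (by assumption) (by simp)
    rw [abs_of_nonpos hx, neg_div]
    exact (neg_le_neg (hy.2.trans this)).trans (neg_le_abs y)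

lemma setOf_mul_le_symmDiff_eq_uIoc {s s' : ℝ} (hs : 0 < s) (hs' : 0 < s') (x : ℝ) :
    {z | s * z ≤ x} ∆ {z | s' * z ≤ x} = Ι (x / s) (x / s') := by
  rw [← Iic_symmDiff_Iic]
  congr 1 <;> ext z <;> simp [le_div_iff₀ hs, le_div_iff₀ hs', mul_comm]

lemma withDensity_Ioc_le_of_le_abs {f : ℝ → ℝ} {C c a b : ℝ} (hf : ∀ y, |y * f y| ≤ C)
    (hc : 0 < c) (hab : ∀ y ∈ Ioc a b, c ≤ |y|) :
    volume.withDensity (fun y => ENNReal.ofReal (f y)) (Ioc a b) ≤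
      ENNReal.ofReal (C / c * (b - a)) := by
  have hC : 0 ≤ C := by simpa using hf 0
  have hbound : ∀ y ∈ Ioc a b, f y ≤ C / c := fun y hy => by
    rw [le_div_iff₀ hc, mul_comm]
    calc c * f y ≤ c * |f y| := mul_le_mul_of_nonneg_left (le_abs_self _) hc.le
      _ ≤ |y| * |f y| := mul_le_mul_of_nonneg_right (hab y hy) (abs_nonneg _)
      _ ≤ C := abs_mul y (f y) ▸ hf y
  calc volume.withDensity (fun y => ENNReal.ofReal (f y)) (Ioc a b)
      = ∫⁻ y in Ioc a b, ENNReal.ofReal (f y) := withDensity_apply _ measurableSet_Ioc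
    _ ≤ ∫⁻ _ in Ioc a b, ENNReal.ofReal (C / c) :=
        setLIntegral_mono measurable_const fun y hy => ENNReal.ofReal_le_ofReal (hbound y hy)
    _ = ENNReal.ofReal (C / c * (b - a)) := by
        rw [setLIntegral_const, Real.volume_Ioc, ← ENNReal.ofReal_mul (by positivity)]

lemma withDensity_uIoc_div_le {f : ℝ → ℝ} {C : ℝ} (hf : ∀ y, |y * f y| ≤ C) (x : ℝ)
    {s s' : ℝ} (hs : 0 < s) (hs' : 0 < s') :
    volume.withDensity (fun y => ENNReal.ofReal (f y)) (Ι (x / s) (x / s')) ≤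
      ENNReal.ofReal (C / min s s' * |s - s'|) := by
  rcases eq_or_ne x 0 with rfl | hx
  · simp
  have hmax : 0 < max s s' := lt_max_of_lt_left hs
  have hmin : 0 < min s s' := lt_min hs hs'
  refine (withDensity_Ioc_le_of_le_abs hf (div_pos (abs_pos.2 hx) hmax)
    fun y hy => abs_div_max_le_abs_of_mem_uIoc hs hs' hy).trans_eq ?_
  congr 1
  have hdiff : x / s' - x / s = x * (s - s') / (max s s' * min s s') := by
    rw [max_mul_min]
    field_simp
  rw [max_sub_min_eq_abs, hdiff, abs_div, abs_mul, abs_of_pos (mul_pos hmax hmin)]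
  field_simp

theorem ProbabilityTheory.IndepFun.measure_preimage_prodMk_eq_lintegral {Ω α β : Type*}
    [MeasurableSpace Ω] [MeasurableSpace α] [MeasurableSpace β] {μ : Measure Ω}
    [IsFiniteMeasure μ] {X : Ω → α} {Y : Ω → β} (hXY : IndepFun X Y μ)
    (hX : Measurable X) (hY : Measurable Y) {T : Set (α × β)} (hT : MeasurableSet T) :
    μ ((fun ω => (X ω, Y ω)) ⁻¹' T) = ∫⁻ ω, μ.map Y (Prod.mk (X ω) ⁻¹' T) ∂μ := by
  rw [← Measure.map_apply (hX.prodMk hY) hT,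
    (indepFun_iff_map_prod_eq_prod_map_map hX.aemeasurable hY.aemeasurable).1 hXY,
    Measure.prod_apply hT, lintegral_map (measurable_measure_prodMk_left hT) hX]

theorem ProbabilityTheory.IndepFun.measureReal_preimage_prodMk_le_integral
    {Ω α β : Type*} [MeasurableSpace Ω] [MeasurableSpace α] [MeasurableSpace β] {μ : Measure Ω}
    [IsFiniteMeasure μ] {X : Ω → α} {Y : Ω → β} (hXY : IndepFun X Y μ)
    (hX : Measurable X) (hY : Measurable Y) {T : Set (α × β)} (hT : MeasurableSet T)
    {g : Ω → ℝ} (hg : Integrable g μ) (hg0 : 0 ≤ᵐ[μ] g)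
    (hslice : ∀ᵐ ω ∂μ, μ.map Y (Prod.mk (X ω) ⁻¹' T) ≤ ENNReal.ofReal (g ω)) :
    μ.real ((fun ω => (X ω, Y ω)) ⁻¹' T) ≤ ∫ ω, g ω ∂μ := by
  refine ENNReal.toReal_le_of_le_ofReal (integral_nonneg_of_ae hg0) ?_
  rw [hXY.measure_preimage_prodMk_eq_lintegral hX hY hT,
    ofReal_integral_eq_lintegral_ofReal hg hg0]
  exact lintegral_mono_ae hslice

theorem expectation_indicator_diff_le_of_scale_general
    {Ω : Type*} [MeasurableSpace Ω] (μ : Measure Ω) [IsProbabilityMeasure μ]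
    (Z S S' : Ω → ℝ) (f : ℝ → ℝ) (Cf ρ : ℝ)
    (hZ : Measurable Z) (hS : Measurable S) (hS' : Measurable S')
    (hindep : IndepFun Z (fun ω => (S ω, S' ω)) μ)
    (hdens : μ.map Z = MeasureTheory.volume.withDensity fun y => ENNReal.ofReal (f y))
    (hCf : ∀ y, |y * f y| ≤ Cf)
    (hρ : 0 < ρ) (hlb : ∀ᵐ ω ∂μ, ρ < min (S ω) (S' ω))
    (hint : Integrable (fun ω => |S ω - S' ω|) μ) :
    ∀ x : ℝ,
      (∫ ω, |(if S ω * Z ω ≤ x then (1 : ℝ) else 0) -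
              if S' ω * Z ω ≤ x then (1 : ℝ) else 0| ∂μ) ≤
        Cf / ρ * ∫ ω, |S ω - S' ω| ∂μ := by
  intro x
  have hCf0 : 0 ≤ Cf := by simpa using hCf 0
  have hK : 0 ≤ Cf / ρ := div_nonneg hCf0 hρ.le
  set T : Set ((ℝ × ℝ) × ℝ) := {p | p.1.1 * p.2 ≤ x} ∆ {p | p.1.2 * p.2 ≤ x}
  have hT : MeasurableSet T :=
    (measurableSet_le (by fun_prop) measurable_const).symmDiff
      (measurableSet_le (by fun_prop) measurable_const)
  have hindicator : (fun ω => |(if S ω * Z ω ≤ x then (1 : ℝ) else 0) -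
      if S' ω * Z ω ≤ x then (1 : ℝ) else 0|) =
      ((fun ω => ((S ω, S' ω), Z ω)) ⁻¹' T).indicator 1 := by
    funext ω
    by_cases h : S ω * Z ω ≤ x <;> by_cases h' : S' ω * Z ω ≤ x <;>
      simp [T, mem_symmDiff, h, h']
  rw [hindicator, integral_indicator_one ((hS.prodMk hS').prodMk hZ hT), ← integral_const_mul]
  refine hindep.symm.measureReal_preimage_prodMk_le_integral (hS.prodMk hS') hZ hT
    (hint.const_mul _) (ae_of_all _ fun ω => mul_nonneg hK (abs_nonneg _)) ?_
  filter_upwards [hlb] with ω hω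
  obtain ⟨hs, hs'⟩ := lt_min_iff.1 hω
  change μ.map Z ({z | S ω * z ≤ x} ∆ {z | S' ω * z ≤ x}) ≤ _
  rw [hdens, setOf_mul_le_symmDiff_eq_uIoc (hρ.trans hs) (hρ.trans hs')]
  exact (withDensity_uIoc_div_le hCf x (hρ.trans hs) (hρ.trans hs')).trans
    (ENNReal.ofReal_le_ofReal (by gcongr))

/-- If `X = σZ`, `X' = σ'Z` with `Z` independent of `(σ,σ')`, `Z` having a density `f`
with `sup_y |y f(y)| ≤ C_f`, and `min(σ,σ') > ρ > 0` a.s., then for every `x`,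
`E|1{X ≤ x} − 1{X' ≤ x}| ≤ (C_f/ρ) E|σ − σ'|`. -/
theorem expectation_indicator_diff_le_of_scale
    {Ω : Type*} [MeasurableSpace Ω] (μ : Measure Ω) [IsProbabilityMeasure μ]
    (Z S S' : Ω → ℝ) (f : ℝ → ℝ) (Cf ρ : ℝ)
    (hZ : Measurable Z) (hS : Measurable S) (hS' : Measurable S')
    (hindep : IndepFun Z (fun ω => (S ω, S' ω)) μ)
    (hdens : μ.map Z = MeasureTheory.volume.withDensity fun y => ENNReal.ofReal (f y))
    (hf : ∀ y, 0 ≤ f y) (hCf : ∀ y, |y * f y| ≤ Cf)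
    (hρ : 0 < ρ) (hlb : ∀ᵐ ω ∂μ, ρ < min (S ω) (S' ω))
    (hint : Integrable (fun ω => |S ω - S' ω|) μ) :
    ∀ x : ℝ,
      (∫ ω, |(if S ω * Z ω ≤ x then (1 : ℝ) else 0) -
              if S' ω * Z ω ≤ x then (1 : ℝ) else 0| ∂μ) ≤
        Cf / ρ * ∫ ω, |S ω - S' ω| ∂μ :=
  expectation_indicator_diff_le_of_scale_general μ Z S S' f Cf ρ hZ hS hS' hindep hdens hCf hρ hlb
    hint
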